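/- Under the A_{\vec p} and RH_{\vec p} conditions, the contribution of the 'small A_{\vec p} cubes' is summable: let R be a dyadic cube and let A be a family of dyadic subcubes of R that are pairwise disjoint at each scale, such that every Q ∈ A with ℓ(R) = 2^s ℓ(Q) satisfies (|Q|^{-1}∫_Q ω) ∏_i (|Q|^{-1}∫_Q σ_i)^{p/p_i'} ≤ [ω,\vec σ]_{A_{\vec p}} / s^2 with s > k ≥ 1. Then Σ_{Q ∈ A} ω(Q)(∏_i σ_i(Q)/|Q|)^p ≤ C_k [ω,\vec σ]_{A_{\vec p}} [\vec σ]_{RH} ∫_R ∏_i σ_i^{p/p_i} dx, where C_k = Σ_{s>k} s^{-2}. -/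

import Mathlib

/-!
On each cube `Q` the summand factors exactly as the local `A_{p⃗}` expression times
`∏ᵢ σᵢ(Q)^{p/pᵢ}`, because `p = p/pᵢ' + p/pᵢ` and `∑ᵢ p/pᵢ = 1`. The first factor is
at most `Ap/s²` and, by the reverse Hölder condition, the second at most
`RH ∫_Q ∏ᵢ σᵢ^{p/pᵢ}`. The cubes of one scale are disjoint subcubes of `R`, so their
integrals add up to at most the integral over `R`, and summing `s⁻²` over the scales
`s > k` gives the constant.
-/

open MeasureTheory ENNReal

noncomputable section

/-- An axis-parallel (half-open) cube in `ℝ^d` with lower-left corner `c` and side length `l`. -/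
def Cube (d : ℕ) (c : Fin d → ℝ) (l : ℝ) : Set (Fin d → ℝ) :=
  {x | ∀ i, c i ≤ x i ∧ x i < c i + l}

lemma measurableSet_cube (d : ℕ) (c : Fin d → ℝ) (l : ℝ) : MeasurableSet (Cube d c l) := by
  have : Cube d c l = Set.univ.pi fun i => Set.Ico (c i) (c i + l) := by
    ext x; simp [Cube]
  rw [this]
  exact MeasurableSet.univ_pi fun i => measurableSet_Ico

lemma ENNReal.rpow_sum_of_nonneg {ι : Type*} (x : ℝ≥0∞) {s : Finset ι} {e : ι → ℝ}
    (he : ∀ i ∈ s, 0 ≤ e i) : x ^ (∑ i ∈ s, e i) = ∏ i ∈ s, x ^ e i := by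
  classical
  induction s using Finset.induction with
  | empty => simp
  | insert j s hj ih =>
    rw [Finset.sum_insert hj, Finset.prod_insert hj,
      ENNReal.rpow_add_of_nonneg _ _ (he j (s.mem_insert_self j))
        (Finset.sum_nonneg fun i hi => he i (Finset.mem_insert_of_mem hi)),
      ih fun i hi => he i (Finset.mem_insert_of_mem hi)]

lemma mul_prod_div_rpow_eq {ι : Type*} [Fintype ι] (w V : ℝ≥0∞) (a : ι → ℝ≥0∞) {P : ℝ}
    {e f : ι → ℝ} (he : ∀ i, 0 ≤ e i) (hf : ∀ i, 0 ≤ f i) (hfe : ∀ i, f i + e i = P)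
    (hsum : ∑ i, e i = 1) :
    w * (∏ i, a i / V) ^ P = (w / V * ∏ i, (a i / V) ^ f i) * ∏ i, a i ^ e i := by
  have hP : 0 ≤ P := by
    rcases isEmpty_or_nonempty ι with hι | ⟨⟨i⟩⟩
    · simp at hsum
    · rw [← hfe i]; exact add_nonneg (hf i) (he i)
  have hsplit : ∀ i, (a i / V) ^ P = (a i / V) ^ f i * (a i ^ e i * V⁻¹ ^ e i) := fun i => by
    rw [← hfe i, ENNReal.rpow_add_of_nonneg _ _ (hf i) (he i), div_eq_mul_inv,
      ENNReal.mul_rpow_of_nonneg _ _ (he i)]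
  have hV : ∏ i, V⁻¹ ^ e i = V⁻¹ := by
    rw [← ENNReal.rpow_sum_of_nonneg _ fun i _ => he i, hsum, ENNReal.rpow_one]
  rw [← ENNReal.prod_rpow_of_nonneg hP, Finset.prod_congr rfl fun i _ => hsplit i,
    Finset.prod_mul_distrib, Finset.prod_mul_distrib, hV, div_eq_mul_inv]
  ring

lemma pos_and_sum_div_eq_one_of_one_div_eq_sum {ι : Type*} [Fintype ι] [Nonempty ι]
    {p : ℝ} {q : ι → ℝ} (hq : ∀ i, 0 < q i) (hp : 1 / p = ∑ i, 1 / q i) :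
    0 < p ∧ ∑ i, p / q i = 1 := by
  have hp0 : 0 < p :=
    one_div_pos.mp <| hp ▸ Finset.sum_pos (fun i _ => one_div_pos.mpr (hq i)) Finset.univ_nonempty
  refine ⟨hp0, ?_⟩
  simp_rw [div_eq_mul_one_div p, ← Finset.mul_sum, ← hp]
  field_simp

lemma tsum_setLIntegral_le_of_pairwise_disjoint {α ι : Type*} [MeasurableSpace α]
    [Countable ι] {μ : Measure α} (f : α → ℝ≥0∞) {T : ι → Set α} {R : Set α}
    (hT : ∀ i, MeasurableSet (T i)) (hd : Pairwise (Function.onFun Disjoint T))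
    (hsub : ∀ i, T i ⊆ R) :
    ∑' i, ∫⁻ x in T i, f x ∂μ ≤ ∫⁻ x in R, f x ∂μ := by
  rw [← lintegral_iUnion hT hd]
  exact lintegral_mono_set (Set.iUnion_subset hsub)

lemma ENNReal.tsum_subtype_prod_le {α β : Type*} {P : α → Prop} {Q : α → β → Prop}
    (f : α × β → ℝ≥0∞) (g : α → ℝ≥0∞) (h : ∀ a, P a → ∑' b : {b // Q a b}, f (a, b) ≤ g a) :
    ∑' x : {x : α × β // P x.1 ∧ Q x.1 x.2}, f x ≤ ∑' a : {a // P a}, g a := by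
  rw [← (Equiv.subtypeProdEquivSigmaSubtype fun a b => P a ∧ Q a b).symm.tsum_eq,
    ENNReal.tsum_sigma']
  refine (ENNReal.tsum_le_tsum fun a => ?_).trans_eq (tsum_subtype {a | P a} g).symm
  by_cases ha : P a
  · rw [Set.indicator_of_mem (show a ∈ {a | P a} from ha)]
    calc ∑' b : {b // P a ∧ Q a b}, f (a, b.1)
        = ∑' b : {b // Q a b}, f (a, b.1) :=
          (Equiv.subtypeEquivRight fun b => and_iff_right ha).tsum_eq fun b => f (a, b.1)
      _ ≤ g a := h a ha
  · have : IsEmpty {b // P a ∧ Q a b} := ⟨fun b => ha b.2.1⟩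
    simp

theorem small_Ap_cubes_sum_general (d m k : ℕ) (hm : 0 < m)
    (p : ℝ) (pp : Fin m → ℝ) (hpp : ∀ i, 1 < pp i)
    (hp : 1 / p = ∑ i, 1 / pp i)
    (ω : (Fin d → ℝ) → ℝ≥0∞) (σ : Fin m → (Fin d → ℝ) → ℝ≥0∞)
    (Ap RH : ℝ≥0∞)
    (hRH : ∀ (c : Fin d → ℝ) (l : ℝ),
      ∏ i, (∫⁻ x in Cube d c l, σ i x) ^ (p / pp i)
        ≤ RH * ∫⁻ x in Cube d c l, ∏ i, (σ i x) ^ (p / pp i))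
    (cR : Fin d → ℝ) (L : ℝ)
    (cA : ℕ → ℕ → Fin d → ℝ) (sel : ℕ → ℕ → Prop)
    (hsub : ∀ s j, k < s → sel s j → Cube d (cA s j) (L / 2 ^ s) ⊆ Cube d cR L)
    (hdisj : ∀ s j j', k < s → sel s j → sel s j' → j ≠ j' →
      Disjoint (Cube d (cA s j) (L / 2 ^ s)) (Cube d (cA s j') (L / 2 ^ s)))
    (hsmall : ∀ s j, k < s → sel s j →
      ((∫⁻ x in Cube d (cA s j) (L / 2 ^ s), ω x) / volume (Cube d (cA s j) (L / 2 ^ s)))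
          * ∏ i, ((∫⁻ x in Cube d (cA s j) (L / 2 ^ s), σ i x)
              / volume (Cube d (cA s j) (L / 2 ^ s))) ^ (p * (pp i - 1) / pp i)
        ≤ Ap / ((s : ℝ≥0∞)) ^ 2) :
    ∑' q : {q : ℕ × ℕ // k < q.1 ∧ sel q.1 q.2},
        (∫⁻ x in Cube d (cA q.1.1 q.1.2) (L / 2 ^ q.1.1), ω x)
          * (∏ i, (∫⁻ x in Cube d (cA q.1.1 q.1.2) (L / 2 ^ q.1.1), σ i x)
              / volume (Cube d (cA q.1.1 q.1.2) (L / 2 ^ q.1.1))) ^ p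
      ≤ (∑' s : {s : ℕ // k < s}, ((s.1 : ℝ≥0∞)) ^ (-2 : ℝ))
          * Ap * RH * ∫⁻ x in Cube d cR L, ∏ i, (σ i x) ^ (p / pp i) := by
  have : Nonempty (Fin m) := ⟨⟨0, hm⟩⟩
  have hpp0 : ∀ i, 0 < pp i := fun i => one_pos.trans (hpp i)
  obtain ⟨hp0, hsum⟩ := pos_and_sum_div_eq_one_of_one_div_eq_sum hpp0 hp
  set G : (Fin d → ℝ) → ℝ≥0∞ := fun x => ∏ i, (σ i x) ^ (p / pp i)
  set Q : ℕ → ℕ → Set (Fin d → ℝ) := fun s j => Cube d (cA s j) (L / 2 ^ s)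
  set B : ℕ × ℕ → ℝ≥0∞ := fun q => Ap / (q.1 : ℝ≥0∞) ^ 2 * (RH * ∫⁻ x in Q q.1 q.2, G x)
  have hcube : ∀ s j, k < s → sel s j →
      (∫⁻ x in Q s j, ω x) * (∏ i, (∫⁻ x in Q s j, σ i x) / volume (Q s j)) ^ p ≤ B (s, j) :=
    fun s j hs hj => by
      rw [mul_prod_div_rpow_eq _ _ _ (fun i => (div_pos hp0 (hpp0 i)).le)
        (fun i => div_nonneg (mul_nonneg hp0.le (sub_nonneg.mpr (hpp i).le)) (hpp0 i).le)
        (fun i => by field_simp [(hpp0 i).ne']; ring) hsum]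
      exact mul_le_mul' (hsmall s j hs hj) (hRH _ _)
  have hscale : ∀ s, k < s → ∑' j : {j // sel s j}, B (s, j)
      ≤ (s : ℝ≥0∞) ^ (-2 : ℝ) * (Ap * RH * ∫⁻ x in Cube d cR L, G x) := fun s hs =>
    calc _ = Ap / (s : ℝ≥0∞) ^ 2 * (RH * ∑' j : {j // sel s j}, ∫⁻ x in Q s j, G x) := by
          simp only [B, ENNReal.tsum_mul_left]
      _ ≤ Ap / (s : ℝ≥0∞) ^ 2 * (RH * ∫⁻ x in Cube d cR L, G x) := by
          gcongr
          exact tsum_setLIntegral_le_of_pairwise_disjoint G (fun j => measurableSet_cube _ _ _)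
            (fun j j' hne => hdisj s j j' hs j.2 j'.2 (Subtype.coe_ne_coe.mpr hne))
            (fun j => hsub s j hs j.2)
      _ = _ := by rw [ENNReal.rpow_neg, ENNReal.rpow_two, div_eq_mul_inv]; ring
  calc _ ≤ ∑' q : {q : ℕ × ℕ // k < q.1 ∧ sel q.1 q.2}, B q :=
        ENNReal.tsum_le_tsum fun q => hcube _ _ q.2.1 q.2.2
    _ ≤ ∑' s : {s : ℕ // k < s},
          (s.1 : ℝ≥0∞) ^ (-2 : ℝ) * (Ap * RH * ∫⁻ x in Cube d cR L, G x) :=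
        ENNReal.tsum_subtype_prod_le B _ hscale
    _ = _ := by rw [ENNReal.tsum_mul_right]; ring

/-- Summing the contribution of the "small `A_{p⃗}` cubes": if `A` is a family of subcubes of
`R`, indexed by scales `s > k` (cubes of scale `s` having side length `2^{-s} ℓ(R)` and being
pairwise disjoint), on which the local `A_{p⃗}` expression is at most `Ap / s²`, then under the
reverse Hölder condition the total contribution is at most
`(∑_{s>k} s^{-2}) · Ap · RH · ∫_R ∏ᵢ σᵢ^{p/pᵢ}`. -/
theorem small_Ap_cubes_sum (d m k : ℕ) (hm : 0 < m) (hk : 1 ≤ k)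
    (p : ℝ) (pp : Fin m → ℝ) (hpp : ∀ i, 1 < pp i)
    (hp : 1 / p = ∑ i, 1 / pp i)
    (ω : (Fin d → ℝ) → ℝ≥0∞) (σ : Fin m → (Fin d → ℝ) → ℝ≥0∞)
    (hω : Measurable ω) (hσ : ∀ i, Measurable (σ i))
    (Ap RH : ℝ≥0∞)
    (hRH : ∀ (c : Fin d → ℝ) (l : ℝ),
      ∏ i, (∫⁻ x in Cube d c l, σ i x) ^ (p / pp i)
        ≤ RH * ∫⁻ x in Cube d c l, ∏ i, (σ i x) ^ (p / pp i))
    (cR : Fin d → ℝ) (L : ℝ) (hL : 0 < L)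
    (cA : ℕ → ℕ → Fin d → ℝ) (sel : ℕ → ℕ → Prop)
    (hsub : ∀ s j, k < s → sel s j → Cube d (cA s j) (L / 2 ^ s) ⊆ Cube d cR L)
    (hdisj : ∀ s j j', k < s → sel s j → sel s j' → j ≠ j' →
      Disjoint (Cube d (cA s j) (L / 2 ^ s)) (Cube d (cA s j') (L / 2 ^ s)))
    (hsmall : ∀ s j, k < s → sel s j →
      ((∫⁻ x in Cube d (cA s j) (L / 2 ^ s), ω x) / volume (Cube d (cA s j) (L / 2 ^ s)))
          * ∏ i, ((∫⁻ x in Cube d (cA s j) (L / 2 ^ s), σ i x)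
              / volume (Cube d (cA s j) (L / 2 ^ s))) ^ (p * (pp i - 1) / pp i)
        ≤ Ap / ((s : ℝ≥0∞)) ^ 2) :
    ∑' q : {q : ℕ × ℕ // k < q.1 ∧ sel q.1 q.2},
        (∫⁻ x in Cube d (cA q.1.1 q.1.2) (L / 2 ^ q.1.1), ω x)
          * (∏ i, (∫⁻ x in Cube d (cA q.1.1 q.1.2) (L / 2 ^ q.1.1), σ i x)
              / volume (Cube d (cA q.1.1 q.1.2) (L / 2 ^ q.1.1))) ^ p
      ≤ (∑' s : {s : ℕ // k < s}, ((s.1 : ℝ≥0∞)) ^ (-2 : ℝ))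
          * Ap * RH * ∫⁻ x in Cube d cR L, ∏ i, (σ i x) ^ (p / pp i) :=
  small_Ap_cubes_sum_general d m k hm p pp hpp hp ω σ Ap RH hRH cR L cA sel hsub hdisj hsmall
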